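/- Let γ be holomorphic with ω := γ' − (1/2)γ², and suppose x(τ) is holomorphic with ẋ ≠ 0 satisfying [x,τ] = Q(x) and ẍ/ẋ = γ + R(x)ẋ for a holomorphic function R. Then ω = (Q(x) − R'(x) − (1/2)R(x)²)·ẋ², and with Q̃ := Q − R' − (1/2)R², ∇̃f := ḟ − kγf on weight-k objects, one has ∇̃ω = (Q̃' + 2RQ̃)(x)·ẋ³ and ∇̃²ω = (Q̃'' + 5RQ̃' + 2R'Q̃ + 6R²Q̃)(x)·ẋ⁴. -/

import Mathlib

/-!
With `Γ = ẍ/ẋ` one has `Γ' − Γ²/2 = [x,τ] ẋ²`, and substituting `γ = Γ − R(x) ẋ` gives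
`γ' − γ²/2 = (Q − R' − R²/2)(x) ẋ²`. Both covariant-derivative identities then come from one
computation: since `ẍ = (γ + R(x) ẋ) ẋ`, the operator `∇̃` sends a weight-`k` pullback `F(x) ẋᵏ`
to the weight-`(k+1)` pullback `(F' + k R F)(x) ẋᵏ⁺¹`.
-/

/-- The meromorphic derivative [x,τ] = x⃛/ẋ³ − (3/2)ẍ²/ẋ⁴. -/
noncomputable def merD (x : ℂ → ℂ) (τ : ℂ) : ℂ :=
  iteratedDeriv 3 x τ / (deriv x τ) ^ 3
    - (3 / 2) * (iteratedDeriv 2 x τ) ^ 2 / (deriv x τ) ^ 4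

open Filter Topology

section RenormalizedConnection

variable {x γ R : ℂ → ℂ} {τ : ℂ}

theorem hasDerivAt_comp_mul_deriv_pow (k : ℕ) {F : ℂ → ℂ} {F' : ℂ}
    (hF : HasDerivAt F F' (x τ)) (hx : DifferentiableAt ℂ x τ)
    (hx2 : HasDerivAt (deriv x) ((γ τ + R (x τ) * deriv x τ) * deriv x τ) τ) :
    HasDerivAt (fun t => F (x t) * deriv x t ^ k)
      (k * γ τ * (F (x τ) * deriv x τ ^ k)
        + (F' + k * R (x τ) * F (x τ)) * deriv x τ ^ (k + 1)) τ := by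
  refine ((hF.comp τ hx.hasDerivAt).mul (hx2.pow k)).congr_deriv ?_
  cases k with
  | zero => simp only [Function.comp_apply, Pi.pow_apply, Nat.cast_zero, pow_zero]; ring
  | succ k =>
    simp only [Function.comp_apply, Pi.pow_apply, Nat.add_sub_cancel]
    push_cast
    ring

theorem deriv_sub_mul_eq_of_eventuallyEq_comp_mul_pow (k : ℕ) {f F : ℂ → ℂ} {F' : ℂ}
    (hf : f =ᶠ[𝓝 τ] fun t => F (x t) * deriv x t ^ k)
    (hF : HasDerivAt F F' (x τ)) (hx : DifferentiableAt ℂ x τ)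
    (hx2 : HasDerivAt (deriv x) ((γ τ + R (x τ) * deriv x τ) * deriv x τ) τ) :
    deriv f τ - k * γ τ * f τ
      = (F' + k * R (x τ) * F (x τ)) * deriv x τ ^ (k + 1) := by
  rw [hf.deriv_eq, (hasDerivAt_comp_mul_deriv_pow k hF hx hx2).deriv, hf.self_of_nhds]
  ring

theorem deriv_sub_half_sq_eq_merD (hx : DifferentiableAt ℂ x τ)
    (hx2 : DifferentiableAt ℂ (deriv x) τ) (hγ : DifferentiableAt ℂ γ τ)
    (hR : DifferentiableAt ℂ R (x τ)) (hx' : deriv x τ ≠ 0)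
    (hconn : deriv (deriv x) =ᶠ[𝓝 τ] fun t => (γ t + R (x t) * deriv x t) * deriv x t) :
    deriv γ τ - (1 / 2) * γ τ ^ 2
      = (merD x τ - deriv R (x τ) - (1 / 2) * R (x τ) ^ 2) * deriv x τ ^ 2 := by
  have hx2' : HasDerivAt (deriv x) ((γ τ + R (x τ) * deriv x τ) * deriv x τ) τ :=
    hconn.eq_of_nhds ▸ hx2.hasDerivAt
  have h2 : iteratedDeriv 2 x τ = (γ τ + R (x τ) * deriv x τ) * deriv x τ := by
    simp only [iteratedDeriv_succ, iteratedDeriv_zero]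
    exact hconn.eq_of_nhds
  have h3 : iteratedDeriv 3 x τ
      = (deriv γ τ + (deriv R (x τ) * deriv x τ * deriv x τ
          + R (x τ) * ((γ τ + R (x τ) * deriv x τ) * deriv x τ))) * deriv x τ
        + (γ τ + R (x τ) * deriv x τ) * ((γ τ + R (x τ) * deriv x τ) * deriv x τ) := by
    simp only [iteratedDeriv_succ, iteratedDeriv_zero]
    rw [hconn.deriv_eq]
    exact ((hγ.hasDerivAt.add ((hR.hasDerivAt.comp τ hx.hasDerivAt).mul hx2')).mul hx2').deriv
  rw [merD, h2, h3]
  field_simp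
  ring

end RenormalizedConnection

/-- For a renormalized connection γ = Γ − R(x)ẋ (i.e. ẍ/ẋ = γ + R(x)ẋ) with
ω = γ' − γ²/2 and Q̃ = Q − R' − R²/2, one has ω = Q̃(x)ẋ²,
∇̃ω = (Q̃' + 2RQ̃)(x)ẋ³ and ∇̃²ω = (Q̃'' + 5RQ̃' + 2R'Q̃ + 6R²Q̃)(x)ẋ⁴. -/
theorem renormalized_connection_identities (U : Set ℂ) (hU : IsOpen U)
    (x γ ω R Q Qt : ℂ → ℂ)
    (hx : ∀ τ ∈ U, AnalyticAt ℂ x τ)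
    (hγa : ∀ τ ∈ U, AnalyticAt ℂ γ τ)
    (hRa : ∀ τ ∈ U, AnalyticAt ℂ R (x τ))
    (hQa : ∀ τ ∈ U, AnalyticAt ℂ Q (x τ))
    (hx' : ∀ τ ∈ U, deriv x τ ≠ 0)
    (hmerD : ∀ τ ∈ U, merD x τ = Q (x τ))
    (hγ : ∀ τ ∈ U, deriv (deriv x) τ = (γ τ + R (x τ) * deriv x τ) * deriv x τ)
    (hωdef : ∀ τ, ω τ = deriv γ τ - (1 / 2) * (γ τ) ^ 2)
    (hQt : ∀ u : ℂ, Qt u = Q u - deriv R u - (1 / 2) * (R u) ^ 2) :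
    ∀ τ ∈ U,
      (ω τ = Qt (x τ) * (deriv x τ) ^ 2
        ∧ deriv ω τ - 2 * γ τ * ω τ
            = (deriv Qt (x τ) + 2 * R (x τ) * Qt (x τ)) * (deriv x τ) ^ 3
        ∧ deriv (fun t => deriv ω t - 2 * γ t * ω t) τ
              - 3 * γ τ * (deriv ω τ - 2 * γ τ * ω τ)
            = (deriv (deriv Qt) (x τ) + 5 * R (x τ) * deriv Qt (x τ)
                + 2 * deriv R (x τ) * Qt (x τ)
                + 6 * (R (x τ)) ^ 2 * Qt (x τ)) * (deriv x τ) ^ 4) := by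
  have hconn : ∀ τ ∈ U,
      deriv (deriv x) =ᶠ[𝓝 τ] fun t => (γ t + R (x t) * deriv x t) * deriv x t :=
    fun τ hτ => eventually_of_mem (hU.mem_nhds hτ) hγ
  have hx2 : ∀ τ ∈ U, HasDerivAt (deriv x) ((γ τ + R (x τ) * deriv x τ) * deriv x τ) τ :=
    fun τ hτ => hγ τ hτ ▸ (hx τ hτ).deriv.differentiableAt.hasDerivAt
  have hQtA : ∀ τ ∈ U, AnalyticAt ℂ Qt (x τ) := fun τ hτ => by
    rw [funext hQt]
    exact ((hQa τ hτ).sub (hRa τ hτ).deriv).sub (analyticAt_const.mul ((hRa τ hτ).pow 2))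
  have hω : ∀ τ ∈ U, ω τ = Qt (x τ) * deriv x τ ^ 2 := fun τ hτ => by
    rw [hωdef, deriv_sub_half_sq_eq_merD (hx τ hτ).differentiableAt
      (hx τ hτ).deriv.differentiableAt (hγa τ hτ).differentiableAt (hRa τ hτ).differentiableAt
      (hx' τ hτ) (hconn τ hτ), hmerD τ hτ, hQt]
  have hdω : ∀ τ ∈ U, deriv ω τ - 2 * γ τ * ω τ
      = (deriv Qt (x τ) + 2 * R (x τ) * Qt (x τ)) * deriv x τ ^ 3 := fun τ hτ => by
    exact_mod_cast deriv_sub_mul_eq_of_eventuallyEq_comp_mul_pow 2 (eventually_of_mem (hU.mem_nhds hτ) hω)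
      (hQtA τ hτ).differentiableAt.hasDerivAt (hx τ hτ).differentiableAt (hx2 τ hτ)
  intro τ hτ
  refine ⟨hω τ hτ, hdω τ hτ, ?_⟩
  have hF : HasDerivAt (fun u => deriv Qt u + 2 * R u * Qt u)
      (deriv (deriv Qt) (x τ) + 2 * deriv R (x τ) * Qt (x τ) + 2 * R (x τ) * deriv Qt (x τ))
      (x τ) := by
    refine ((hQtA τ hτ).deriv.differentiableAt.hasDerivAt.add
      (((hRa τ hτ).differentiableAt.hasDerivAt.const_mul 2).mul
        (hQtA τ hτ).differentiableAt.hasDerivAt)).congr_deriv ?_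
    ring
  have h := deriv_sub_mul_eq_of_eventuallyEq_comp_mul_pow 3
    (eventually_of_mem (hU.mem_nhds hτ) hdω) hF (hx τ hτ).differentiableAt (hx2 τ hτ)
  linear_combination h
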